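/- With notation as above, the ratio π(x_t, x'_{t-1} | x_{t-1}, y_{0:T}) / p(x'_{t-1}, x_t | y_{0:T}) equals [p(x_t|x_{t-1}) p(y_{t:T}|y_{0:t-1})] / [p(x_t|x'_{t-1}) p(y_{t:T}|x_{t-1})]; in particular it does not depend on the intractable marginal p(x_t|y_{0:t-1}). -/

import Mathlib

/-!
Inside the smoothing joint the backward likelihood `p(y_{t:T} | x'_{t-1})` of `smoothprev`
cancels against the one of `cond`; afterwards `p(y_{t:T} | x_t) p(x'_{t-1} | y_{0:t-1})` is a common
factor of both densities, so only the transition and likelihood terms survive in the ratio.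
-/

theorem stmt5_general {X : Type*}
    (trans : X → X → ℝ)     -- p(x_t | x_{t-1} = ·)
    (obslik : X → ℝ)        -- p(y_{t:T} | x_t)
    (lik : X → ℝ)           -- p(y_{t:T} | x_{t-1} = ·)
    (likpast : ℝ)           -- p(y_{t:T} | y_{0:t-1})
    (filtprev : X → ℝ)      -- p(x_{t-1} | y_{0:t-1})
    (smoothprev : X → ℝ)    -- p(x_{t-1} | y_{0:T})
    (cond : X → X → ℝ)      -- p(x_t | x_{t-1} = ·, y_{t:T})
    (joint : X → X → ℝ)     -- p(x'_{t-1}, x_t | y_{0:T})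
    (Pi : X → X → X → ℝ)
    (hobslik : ∀ x, 0 < obslik x)
    (hlik : ∀ b, 0 < lik b)
    (hfiltprev : ∀ b, 0 < filtprev b)
    (hcond : ∀ b x, cond b x = obslik x * trans b x / lik b)
    (hsmoothprev : ∀ b, smoothprev b = lik b * filtprev b / likpast)
    (hjoint : ∀ b' x, joint b' x = smoothprev b' * cond b' x)
    (hPi : ∀ b x b', Pi b x b' = cond b x * filtprev b') :
    ∀ b x b', Pi b x b' / joint b' x =
      trans b x * likpast / (trans b' x * lik b) := by
  intro b x b'
  have hjoint_eq : joint b' x = filtprev b' * obslik x * trans b' x / likpast := by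
    rw [hjoint, hsmoothprev, hcond]
    field_simp [(hlik b').ne']
  have hPi_eq : Pi b x b' = filtprev b' * obslik x * trans b x / lik b := by
    rw [hPi, hcond]
    ring
  rw [hPi_eq, hjoint_eq]
  field_simp [(hfiltprev b').ne', (hobslik x).ne']

/-- with `π(x_t, x'_{t-1}|x_{t-1}, y_{0:T}) = p(x_t|x_{t-1}, y_{t:T}) p(x'_{t-1}|y_{0:t-1})`
and `p(x'_{t-1}, x_t|y_{0:T}) = p(x'_{t-1}|y_{0:T}) p(x_t|x'_{t-1}, y_{t:T})`, the ratio
`π / p(x'_{t-1}, x_t|y_{0:T})` equals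
`[p(x_t|x_{t-1}) p(y_{t:T}|y_{0:t-1})] / [p(x_t|x'_{t-1}) p(y_{t:T}|x_{t-1})]`;
in particular it does not depend on the intractable marginal `p(x_t|y_{0:t-1})`. -/
theorem stmt5 {X : Type*}
    (trans : X → X → ℝ)     -- p(x_t | x_{t-1} = ·)
    (obslik : X → ℝ)        -- p(y_{t:T} | x_t)
    (lik : X → ℝ)           -- p(y_{t:T} | x_{t-1} = ·)
    (likpast : ℝ)           -- p(y_{t:T} | y_{0:t-1})
    (filtprev : X → ℝ)      -- p(x_{t-1} | y_{0:t-1})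
    (smoothprev : X → ℝ)    -- p(x_{t-1} | y_{0:T})
    (cond : X → X → ℝ)      -- p(x_t | x_{t-1} = ·, y_{t:T})
    (joint : X → X → ℝ)     -- p(x'_{t-1}, x_t | y_{0:T})
    (Pi : X → X → X → ℝ)
    (htrans : ∀ b x, 0 < trans b x) (hobslik : ∀ x, 0 < obslik x)
    (hlik : ∀ b, 0 < lik b) (hlikpast : 0 < likpast)
    (hfiltprev : ∀ b, 0 < filtprev b)
    (hcond : ∀ b x, cond b x = obslik x * trans b x / lik b)
    (hsmoothprev : ∀ b, smoothprev b = lik b * filtprev b / likpast)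
    (hjoint : ∀ b' x, joint b' x = smoothprev b' * cond b' x)
    (hPi : ∀ b x b', Pi b x b' = cond b x * filtprev b') :
    ∀ b x b', Pi b x b' / joint b' x =
      trans b x * likpast / (trans b' x * lik b) :=
  stmt5_general trans obslik lik likpast filtprev smoothprev cond joint Pi hobslik hlik hfiltprev
    hcond hsmoothprev hjoint hPi
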